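/- For x ∈ ℝ, λ ≥ 0 and E± = ((1−λ±x)/2)𝟙 + λΠ± with Π± = (1/2)(𝟙 ± Q(Θ,Φ)), one has E₊² + E₋² = ((1+x²+λ²)/2)𝟙 + xλ·Q(Θ,Φ); consequently, in the measurement model with system state ρ_S = (1/2)𝟙, memory ρ_M = |0⟩⟨0| ⊗ (1/2)𝟙, system–memory unitary U_SM = (|0⟩⟨0|⊗𝟙₂ + |1⟩⟨1|⊗σ₁)⊗𝟙₂ and measurement operators P̃± = E± ⊗ (1/2)𝟙₂ on the memory, the normalized post-measurement reduced system state is ρ′_S = (1/2)·!![1 + 2xλcosΘ/(1+x²+λ²), 0; 0, 1 − 2xλcosΘ/(1+x²+λ²)], and the system energy change for H_S = ω_S σ₃ is ΔE_S = Tr[H_S(ρ′_S − ρ_S)] = 2xλω_S cosΘ/(1+x²+λ²). -/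
import Mathlib


open Matrix

/-- Pauli matrix σ₁. -/
noncomputable def σ1 : Matrix (Fin 2) (Fin 2) ℂ := !![0, 1; 1, 0]
/-- Pauli matrix σ₂. -/
noncomputable def σ2 : Matrix (Fin 2) (Fin 2) ℂ := !![0, -Complex.I; Complex.I, 0]
/-- Pauli matrix σ₃. -/
noncomputable def σ3 : Matrix (Fin 2) (Fin 2) ℂ := !![1, 0; 0, -1]

/-- The three Pauli matrices, indexed. -/
noncomputable def pauli : Fin 3 → Matrix (Fin 2) (Fin 2) ℂ
  | 0 => σ1
  | 1 => σ2
  | 2 => σ3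

/-- `v · σ = v₁σ₁ + v₂σ₂ + v₃σ₃` for `v ∈ ℝ³`. -/
noncomputable def dotσ (v : Fin 3 → ℝ) : Matrix (Fin 2) (Fin 2) ℂ :=
  ∑ i, (v i : ℂ) • pauli i

/-- Euclidean norm of `v ∈ ℝ³`. -/
noncomputable def enorm3 (v : Fin 3 → ℝ) : ℝ := Real.sqrt (v 0 ^ 2 + v 1 ^ 2 + v 2 ^ 2)

open Kronecker

/-- The dichotomic observable `Q(Θ,Φ)`. -/
noncomputable def Qobs (Θ Φ : ℝ) : Matrix (Fin 2) (Fin 2) ℂ :=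
  !![(Real.cos Θ : ℂ), Complex.exp (Φ * Complex.I) * (Real.sin Θ : ℂ);
     Complex.exp (-Φ * Complex.I) * (Real.sin Θ : ℂ), -(Real.cos Θ : ℂ)]

/-- Biased–unsharp POVM element `E_s = ((1−λ+sx)/2)𝟙 + λΠ_s`, with
`Π_s = (1/2)(𝟙 + s Q(Θ,Φ))` and sign `s = ±1`. -/
noncomputable def Ebu (x l Θ Φ s : ℝ) : Matrix (Fin 2) (Fin 2) ℂ :=
  (((1 - l + s * x)/2 : ℝ) : ℂ) • 1 + (l : ℂ) • ((1/2 : ℂ) • (1 + (s : ℂ) • Qobs Θ Φ))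

/-- `|0⟩⟨0|`. -/
noncomputable def ket0bra0 : Matrix (Fin 2) (Fin 2) ℂ := !![1, 0; 0, 0]
/-- `|1⟩⟨1|`. -/
noncomputable def ket1bra1 : Matrix (Fin 2) (Fin 2) ℂ := !![0, 0; 0, 1]

/-- The system–memory unitary `U_SM = (|0⟩⟨0|⊗𝟙₂ + |1⟩⟨1|⊗σ₁)⊗𝟙₂`. -/
noncomputable def USM : Matrix (Fin 2 × Fin 2 × Fin 2) (Fin 2 × Fin 2 × Fin 2) ℂ :=
  ket0bra0 ⊗ₖ ((1 : Matrix (Fin 2) (Fin 2) ℂ) ⊗ₖ (1 : Matrix (Fin 2) (Fin 2) ℂ))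
    + ket1bra1 ⊗ₖ (σ1 ⊗ₖ (1 : Matrix (Fin 2) (Fin 2) ℂ))

/-- The initial system ⊗ memory state `ρ_S ⊗ ρ_M = (𝟙/2) ⊗ (|0⟩⟨0| ⊗ 𝟙/2)`. -/
noncomputable def rho0 : Matrix (Fin 2 × Fin 2 × Fin 2) (Fin 2 × Fin 2 × Fin 2) ℂ :=
  ((1/2 : ℂ) • (1 : Matrix (Fin 2) (Fin 2) ℂ)) ⊗ₖ
    (ket0bra0 ⊗ₖ ((1/2 : ℂ) • (1 : Matrix (Fin 2) (Fin 2) ℂ)))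

/-- The measurement operator `𝟙 ⊗ P̃_s = 𝟙 ⊗ (E_s ⊗ (1/2)𝟙₂)` on system ⊗ memory. -/
noncomputable def Ptilde (x l Θ Φ s : ℝ) :
    Matrix (Fin 2 × Fin 2 × Fin 2) (Fin 2 × Fin 2 × Fin 2) ℂ :=
  (1 : Matrix (Fin 2) (Fin 2) ℂ) ⊗ₖ
    (Ebu x l Θ Φ s ⊗ₖ ((1/2 : ℂ) • (1 : Matrix (Fin 2) (Fin 2) ℂ)))

/-- The unnormalized post-measurement joint state
`ρ′_SM = Σ_{s=±1} (𝟙⊗P̃_s) U_SM (ρ_S⊗ρ_M) U_SM† (𝟙⊗P̃_s)`. -/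
noncomputable def rhoSM (x l Θ Φ : ℝ) :
    Matrix (Fin 2 × Fin 2 × Fin 2) (Fin 2 × Fin 2 × Fin 2) ℂ :=
  Ptilde x l Θ Φ 1 * (USM * rho0 * USMᴴ) * Ptilde x l Θ Φ 1
    + Ptilde x l Θ Φ (-1) * (USM * rho0 * USMᴴ) * Ptilde x l Θ Φ (-1)

/-- The unnormalized post-measurement reduced system state (partial trace over memory). -/
noncomputable def rhoSred (x l Θ Φ : ℝ) : Matrix (Fin 2) (Fin 2) ℂ :=
  Matrix.of fun i j => ∑ m : Fin 2 × Fin 2, rhoSM x l Θ Φ (i, m) (j, m)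


section AuxStmt14
open Matrix Kronecker

private lemma part1_aux (x l Θ Φ : ℝ) :
    Ebu x l Θ Φ 1 * Ebu x l Θ Φ 1 + Ebu x l Θ Φ (-1) * Ebu x l Θ Φ (-1)
        = (((1 + x ^ 2 + l ^ 2)/2 : ℝ) : ℂ) • 1 + ((x * l : ℝ) : ℂ) • Qobs Θ Φ := by
  have he : Complex.exp (Φ * Complex.I) * Complex.exp (-(Φ * Complex.I)) = 1 := by
    rw [← Complex.exp_add]; ring_nf; exact Complex.exp_zero
  have hs : Complex.sin Θ ^ 2 = 1 - Complex.cos Θ ^ 2 := by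
    linear_combination Complex.sin_sq_add_cos_sq (Θ:ℂ)
  ext i j
  fin_cases i <;> fin_cases j <;>
    simp [Ebu, Qobs, Matrix.mul_apply, Fin.sum_univ_two, Matrix.one_apply] <;>
    push_cast
  · linear_combination ((l:ℂ)^2/2 * Complex.sin (Θ:ℂ)^2) * he + ((l:ℂ)^2/2) * hs
  · ring
  · ring
  · linear_combination ((l:ℂ)^2/2 * Complex.sin (Θ:ℂ)^2) * he + ((l:ℂ)^2/2) * hs

private lemma kron_conjT {m n : Type*} (A : Matrix m m ℂ) (B : Matrix n n ℂ) :
    (A ⊗ₖ B)ᴴ = Aᴴ ⊗ₖ Bᴴ := by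
  ext ⟨i, a⟩ ⟨j, b⟩
  simp [Matrix.conjTranspose_apply, Matrix.kroneckerMap_apply]

private lemma fact2 : ket0bra0 * ket0bra0 = ket0bra0 ∧ ket0bra0 * ket1bra1 = 0 ∧
    ket1bra1 * ket0bra0 = 0 ∧ ket1bra1 * ket1bra1 = ket1bra1 ∧
    ket0bra0ᴴ = ket0bra0 ∧ ket1bra1ᴴ = ket1bra1 ∧ σ1ᴴ = σ1 ∧
    σ1 * ket0bra0 * σ1 = ket1bra1 := by
  refine ⟨?_, ?_, ?_, ?_, ?_, ?_, ?_, ?_⟩ <;>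
    (ext i j; fin_cases i <;> fin_cases j <;>
      simp [ket0bra0, ket1bra1, σ1, Matrix.mul_apply, Fin.sum_univ_two])

private lemma hU_aux : USM * rho0 * USMᴴ
    = ket0bra0 ⊗ₖ (ket0bra0 ⊗ₖ ((1/4 : ℂ) • 1))
      + ket1bra1 ⊗ₖ (ket1bra1 ⊗ₖ ((1/4 : ℂ) • 1)) := by
  obtain ⟨h1, h2, h3, h4, h5, h6, h7, h8⟩ := fact2
  have hrho : rho0 = (1/4 : ℂ) • ((1 : Matrix (Fin 2) (Fin 2) ℂ) ⊗ₖ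
      (ket0bra0 ⊗ₖ (1 : Matrix (Fin 2) (Fin 2) ℂ))) := by
    rw [rho0, Matrix.kronecker_smul, Matrix.kronecker_smul, Matrix.smul_kronecker,
      smul_smul]
    norm_num
  have hUH : USMᴴ = USM := by
    rw [USM, conjTranspose_add, kron_conjT, kron_conjT, kron_conjT, kron_conjT,
      h5, h6, h7, conjTranspose_one]
  rw [hrho, hUH, USM]
  rw [Matrix.mul_smul, Matrix.smul_mul]
  rw [add_mul, add_mul, mul_add, mul_add]
  simp only [← Matrix.mul_kronecker_mul, Matrix.mul_one, Matrix.one_mul, h1, h2, h3, h4, h8,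
    Matrix.zero_kronecker, Matrix.kronecker_zero, add_zero, zero_add,
    smul_add, Matrix.kronecker_smul]

private lemma hPMP_aux (x l Θ Φ s : ℝ) :
    Ptilde x l Θ Φ s * (USM * rho0 * USMᴴ) * Ptilde x l Θ Φ s
      = (1/16 : ℂ) •
          (ket0bra0 ⊗ₖ ((Ebu x l Θ Φ s * ket0bra0 * Ebu x l Θ Φ s) ⊗ₖ 1)
            + ket1bra1 ⊗ₖ ((Ebu x l Θ Φ s * ket1bra1 * Ebu x l Θ Φ s) ⊗ₖ 1)) := by
  have hPt : Ptilde x l Θ Φ s = (1/2 : ℂ) • ((1 : Matrix (Fin 2) (Fin 2) ℂ) ⊗ₖ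
      (Ebu x l Θ Φ s ⊗ₖ (1 : Matrix (Fin 2) (Fin 2) ℂ))) := by
    rw [Ptilde, Matrix.kronecker_smul, Matrix.kronecker_smul]
  rw [hU_aux, hPt]
  simp only [Matrix.kronecker_smul, Matrix.smul_kronecker, Matrix.smul_mul, Matrix.mul_smul,
    smul_smul, Matrix.mul_add, Matrix.add_mul, smul_add, ← Matrix.mul_kronecker_mul,
    Matrix.mul_one, Matrix.one_mul]
  norm_num

private lemma ptrace_aux (A : Matrix (Fin 2) (Fin 2) ℂ)
    (M : Matrix (Fin 2 × Fin 2) (Fin 2 × Fin 2) ℂ) (i j : Fin 2) :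
    ∑ m : Fin 2 × Fin 2, (A ⊗ₖ M) (i, m) (j, m) = A i j * M.trace := by
  simp [Matrix.kroneckerMap_apply, Matrix.trace, Matrix.diag, Finset.mul_sum]

private lemma tr_kb (M N : Matrix (Fin 2) (Fin 2) ℂ) :
    (M * ket0bra0 * N).trace = (N * M) 0 0 ∧ (M * ket1bra1 * N).trace = (N * M) 1 1 := by
  constructor <;>
    (simp [Matrix.trace, Matrix.diag, Matrix.mul_apply, Fin.sum_univ_two, ket0bra0, ket1bra1];
     ring)

private lemma hred_aux (x l Θ Φ : ℝ) :
    rhoSred x l Θ Φ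
      = !![(((1 + x ^ 2 + l ^ 2 + 2 * x * l * Real.cos Θ)/16 : ℝ) : ℂ), 0;
           0, (((1 + x ^ 2 + l ^ 2 - 2 * x * l * Real.cos Θ)/16 : ℝ) : ℂ)] := by
  have hp := part1_aux x l Θ Φ
  have h00 : (Ebu x l Θ Φ 1 * Ebu x l Θ Φ 1 + Ebu x l Θ Φ (-1) * Ebu x l Θ Φ (-1)) 0 0
      = (((1 + x ^ 2 + l ^ 2)/2 : ℝ) : ℂ) + ((x * l : ℝ) : ℂ) * Real.cos Θ := by
    rw [hp]; simp [Qobs, Matrix.one_apply]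
  have h11 : (Ebu x l Θ Φ 1 * Ebu x l Θ Φ 1 + Ebu x l Θ Φ (-1) * Ebu x l Θ Φ (-1)) 1 1
      = (((1 + x ^ 2 + l ^ 2)/2 : ℝ) : ℂ) - ((x * l : ℝ) : ℂ) * Real.cos Θ := by
    rw [hp]; simp [Qobs, Matrix.one_apply]; ring
  ext i j
  rw [rhoSred]
  have hSM : ∀ i j : Fin 2, ∀ m : Fin 2 × Fin 2, rhoSM x l Θ Φ (i, m) (j, m)
      = rhoSM x l Θ Φ (i, m) (j, m) := fun _ _ _ => rfl
  have key : ∀ i j : Fin 2, (∑ m : Fin 2 × Fin 2, rhoSM x l Θ Φ (i, m) (j, m))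
      = (1/16 : ℂ) * (ket0bra0 i j *
          ((Ebu x l Θ Φ 1 * ket0bra0 * Ebu x l Θ Φ 1) ⊗ₖ (1 : Matrix (Fin 2) (Fin 2) ℂ)).trace
        + ket1bra1 i j *
          ((Ebu x l Θ Φ 1 * ket1bra1 * Ebu x l Θ Φ 1) ⊗ₖ (1 : Matrix (Fin 2) (Fin 2) ℂ)).trace)
      + (1/16 : ℂ) * (ket0bra0 i j *
          ((Ebu x l Θ Φ (-1) * ket0bra0 * Ebu x l Θ Φ (-1)) ⊗ₖ (1 : Matrix (Fin 2) (Fin 2) ℂ)).trace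
        + ket1bra1 i j *
          ((Ebu x l Θ Φ (-1) * ket1bra1 * Ebu x l Θ Φ (-1)) ⊗ₖ (1 : Matrix (Fin 2) (Fin 2) ℂ)).trace) := by
    intro i j
    simp only [rhoSM, hPMP_aux, Matrix.add_apply, Matrix.smul_apply, smul_eq_mul, mul_add,
      Finset.sum_add_distrib, ← Finset.mul_sum]
    rw [ptrace_aux, ptrace_aux, ptrace_aux, ptrace_aux]
  rw [Matrix.of_apply, key]
  have t1 := (tr_kb (Ebu x l Θ Φ 1) (Ebu x l Θ Φ 1)).1
  have t2 := (tr_kb (Ebu x l Θ Φ 1) (Ebu x l Θ Φ 1)).2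
  have t3 := (tr_kb (Ebu x l Θ Φ (-1)) (Ebu x l Θ Φ (-1))).1
  have t4 := (tr_kb (Ebu x l Θ Φ (-1)) (Ebu x l Θ Φ (-1))).2
  rw [Matrix.trace_kronecker, Matrix.trace_kronecker, Matrix.trace_kronecker,
    Matrix.trace_kronecker, t1, t2, t3, t4]
  have trone : (1 : Matrix (Fin 2) (Fin 2) ℂ).trace = 2 := by
    simp [Matrix.trace, Matrix.diag, Fin.sum_univ_two, Matrix.one_apply]
  rw [trone]
  have e00 := h00
  have e11 := h11
  rw [Matrix.add_apply] at e00 e11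
  push_cast at e00 e11
  fin_cases i <;> fin_cases j <;>
    simp [ket0bra0, ket1bra1] <;> push_cast <;>
    first
      | linear_combination (1/8 : ℂ) * e00
      | linear_combination (1/8 : ℂ) * e11

private lemma htrace_aux (x l Θ Φ : ℝ) :
    (rhoSM x l Θ Φ).trace = (((1 + x ^ 2 + l ^ 2)/8 : ℝ) : ℂ) := by
  have h : (rhoSM x l Θ Φ).trace = (rhoSred x l Θ Φ).trace := by
    rw [Matrix.trace, Matrix.trace]
    rw [show (∑ i, (rhoSM x l Θ Φ).diag i) = ∑ i : Fin 2 × Fin 2 × Fin 2,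
      rhoSM x l Θ Φ i i from rfl]
    rw [Fintype.sum_prod_type]
    simp [rhoSred, Matrix.diag]
  rw [h, hred_aux]
  simp [Matrix.trace, Matrix.diag, Fin.sum_univ_two]
  push_cast; ring

end AuxStmt14

/-- `E₊² + E₋² = ((1+x²+λ²)/2)𝟙 + xλ·Q(Θ,Φ)`; consequently, the normalized post-measurement
reduced system state is `(1/2)diag(1 ± 2xλcosΘ/(1+x²+λ²))`, and the system energy change for
`H_S = ω_S σ₃` equals `2xλω_S cosΘ/(1+x²+λ²)`. -/
theorem stmt14 (x l Θ Φ : ℝ) (hl : 0 ≤ l) (ωS : ℝ) :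
    (Ebu x l Θ Φ 1 * Ebu x l Θ Φ 1 + Ebu x l Θ Φ (-1) * Ebu x l Θ Φ (-1)
        = (((1 + x ^ 2 + l ^ 2)/2 : ℝ) : ℂ) • 1 + ((x * l : ℝ) : ℂ) • Qobs Θ Φ) ∧
    ((rhoSM x l Θ Φ).trace)⁻¹ • rhoSred x l Θ Φ
        = (1/2 : ℂ) •
            !![1 + ((2 * x * l * Real.cos Θ / (1 + x ^ 2 + l ^ 2) : ℝ) : ℂ), 0;
               0, 1 - ((2 * x * l * Real.cos Θ / (1 + x ^ 2 + l ^ 2) : ℝ) : ℂ)] ∧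
    ((ωS : ℂ) • σ3 *
        (((rhoSM x l Θ Φ).trace)⁻¹ • rhoSred x l Θ Φ
          - (1/2 : ℂ) • (1 : Matrix (Fin 2) (Fin 2) ℂ))).trace
      = ((2 * x * l * ωS * Real.cos Θ / (1 + x ^ 2 + l ^ 2) : ℝ) : ℂ) := by
  have hA : (0:ℝ) < 1 + x ^ 2 + l ^ 2 := by positivity
  have hAne : ((1 + x ^ 2 + l ^ 2 : ℝ) : ℂ) ≠ 0 := by
    exact_mod_cast Complex.ofReal_ne_zero.mpr hA.ne'
  have htr := htrace_aux x l Θ Φ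
  have hred := hred_aux x l Θ Φ
  have h1 : (1 : ℂ) + (x:ℂ)^2 + (l:ℂ)^2 ≠ 0 := by
    have := hAne; push_cast at this; convert this using 2 <;> ring_nf
  refine ⟨part1_aux x l Θ Φ, ?_, ?_⟩
  · rw [htr, hred]
    ext i j
    fin_cases i <;> fin_cases j <;>
      simp [Matrix.smul_apply] <;> push_cast <;> field_simp [h1] <;> ring
  · rw [htr, hred]
    simp only [Matrix.trace, Matrix.diag, Fin.sum_univ_two, Matrix.mul_apply,
      Matrix.sub_apply, Matrix.smul_apply, Matrix.one_apply, σ3]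
    norm_num [Matrix.smul_apply]
    push_cast
    field_simp [h1]
    ring
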